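/- For every integer n ≥ 1 and every integer a < 0 with a ≡ n (mod 2), the map w ↦ (V(w), n − τ_V(w)) is a bijection from the set of simple walks w of length n with w(n) = a onto the set of pairs (v, k) where v is a simple walk of length n with v(n) = a, 0 ≤ k ≤ n, v(j) ≥ 0 for 0 ≤ j ≤ k, and v(j) > a for k ≤ j < n. -/
import Mathlib


/-- The set of simple walks of length `n` starting at `0` and ending at `a`,
encoded as functions `ℕ → ℤ` that vanish beyond `n`. -/
def SimpleBridge (n : ℕ) (a : ℤ) : Set (ℕ → ℤ) :=
  {w | w 0 = 0 ∧ (∀ j < n, |w (j + 1) - w j| = 1) ∧ w n = a ∧ ∀ j, n < j → w j = 0}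

/-- The first time at which a walk of length `n` attains its global minimum on `{0,…,n}`. -/
noncomputable def tauV (n : ℕ) (w : ℕ → ℤ) : ℕ :=
  sInf {j | j ≤ n ∧ ∀ i ≤ n, w j ≤ w i}

/-- The (discrete) Vervaat transform of a walk of length `n`, again encoded as a
function `ℕ → ℤ` vanishing beyond `n`. -/
noncomputable def vervaat (n : ℕ) (w : ℕ → ℤ) : ℕ → ℤ := fun i =>
  if i ≤ n then
    (if i ≤ n - tauV n w then w (tauV n w + i) - w (tauV n w)
     else w (tauV n w + i - n) + w n - w (tauV n w))
  else 0

/-- The target set of pairs `(v, k)` : `v` a simple bridge ending at `a`, `0 ≤ k ≤ n`,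
`v(j) ≥ 0` for `0 ≤ j ≤ k`, and `v(j) > a` for `k ≤ j < n`. -/
def VervaatTarget (n : ℕ) (a : ℤ) : Set ((ℕ → ℤ) × ℕ) :=
  {p | p.1 ∈ SimpleBridge n a ∧ p.2 ≤ n ∧ (∀ j ≤ p.2, 0 ≤ p.1 j) ∧
    ∀ j, p.2 ≤ j → j < n → a < p.1 j}

/-- The inverse of the Vervaat transform. -/
noncomputable def vinv (n : ℕ) (a : ℤ) (p : (ℕ → ℤ) × ℕ) : ℕ → ℤ := fun j =>
  if j ≤ n then
    (if j + p.2 ≤ n then p.1 (j + p.2) - p.1 p.2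
     else p.1 (j + p.2 - n) + a - p.1 p.2)
  else 0

lemma tauV_le (n : ℕ) (w : ℕ → ℤ) : tauV n w ≤ n ∧ ∀ i ≤ n, w (tauV n w) ≤ w i := by
  have hne : {j | j ≤ n ∧ ∀ i ≤ n, w j ≤ w i}.Nonempty := by
    obtain ⟨j, hj, hmin⟩ := Finset.exists_min_image (Finset.range (n+1)) w ⟨0, by simp⟩
    exact ⟨j, Nat.lt_succ_iff.mp (Finset.mem_range.mp hj),
      fun i hi => hmin i (Finset.mem_range.mpr (Nat.lt_succ_of_le hi))⟩
  exact Nat.sInf_mem hne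

lemma tauV_first (n : ℕ) (w : ℕ → ℤ) {t j : ℕ} (ht : tauV n w = t) (hj : j < t)
    (hjn : j ≤ n) : w t < w j := by
  subst ht
  have hnot : j ∉ {j | j ≤ n ∧ ∀ i ≤ n, w j ≤ w i} := Nat.notMem_of_lt_sInf hj
  simp only [Set.mem_setOf_eq, not_and] at hnot
  push_neg at hnot
  obtain ⟨i, hi, hwi⟩ := hnot hjn
  exact lt_of_le_of_lt ((tauV_le n w).2 i hi) hwi

lemma tauV_eq (n : ℕ) (w : ℕ → ℤ) {t : ℕ} (ht : t ≤ n)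
    (hmin : ∀ i ≤ n, w t ≤ w i) (hfirst : ∀ j < t, w t < w j) :
    tauV n w = t := by
  refine le_antisymm (Nat.sInf_le ⟨ht, hmin⟩) ?_
  refine le_csInf ⟨t, ht, hmin⟩ ?_
  rintro j ⟨hjn, hjm⟩
  by_contra h
  push_neg at h
  exact absurd (hjm t ht) (not_le.mpr (hfirst j h))

lemma vervaat_lo (n : ℕ) (w : ℕ → ℤ) {t i : ℕ} (ht : tauV n w = t) (hi : i ≤ n - t) :
    vervaat n w i = w (t + i) - w t := by
  subst ht
  have h1 : i ≤ n := le_trans hi (Nat.sub_le n _)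
  simp only [vervaat, if_pos h1, if_pos hi]

lemma vervaat_hi (n : ℕ) (w : ℕ → ℤ) (hw0 : w 0 = 0) {t i : ℕ} (ht : tauV n w = t)
    (h1 : n - t ≤ i) (h2 : i ≤ n) :
    vervaat n w i = w (t + i - n) + w n - w t := by
  have htn : t ≤ n := ht ▸ (tauV_le n w).1
  rcases eq_or_lt_of_le h1 with h | h
  · rw [vervaat_lo n w ht (le_of_eq h.symm)]
    rw [show t + i - n = 0 from by omega, show t + i = n from by omega, hw0]; ring
  · subst ht
    simp only [vervaat, if_pos h2, if_neg (not_le.mpr h)]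

lemma vervaat_top (n : ℕ) (w : ℕ → ℤ) {i : ℕ} (hi : n < i) : vervaat n w i = 0 := by
  simp only [vervaat, if_neg (not_le.mpr hi)]

lemma vinv_lo (n : ℕ) (a : ℤ) (v : ℕ → ℤ) (k : ℕ) (hk : k ≤ n) {j : ℕ} (hj : j ≤ n - k) :
    vinv n a (v, k) j = v (j + k) - v k := by
  have h1 : j ≤ n := by omega
  have h2 : j + k ≤ n := by omega
  simp only [vinv, if_pos h1, if_pos h2]

lemma vinv_hi (n : ℕ) (a : ℤ) (v : ℕ → ℤ) (k : ℕ) (hk : k ≤ n) (hv0 : v 0 = 0)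
    (hvn : v n = a) {j : ℕ} (h1 : n - k ≤ j) (h2 : j ≤ n) :
    vinv n a (v, k) j = v (j + k - n) + a - v k := by
  rcases eq_or_lt_of_le h1 with h | h
  · rw [vinv_lo n a v k hk (le_of_eq h.symm)]
    rw [show j + k - n = 0 from by omega, show j + k = n from by omega, hv0, hvn]; ring
  · have hc : ¬ (j + k ≤ n) := by omega
    simp only [vinv, if_pos h2, if_neg hc]

lemma vinv_top (n : ℕ) (a : ℤ) (v : ℕ → ℤ) (k : ℕ) {j : ℕ} (hj : n < j) :
    vinv n a (v, k) j = 0 := by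
  simp only [vinv, if_neg (not_le.mpr hj)]

lemma forward_maps (n : ℕ) (a : ℤ) (ha : a < 0) :
    Set.MapsTo (fun w => (vervaat n w, n - tauV n w)) (SimpleBridge n a)
      (VervaatTarget n a) := by
  rintro w ⟨hw0, hstep, hwn, hbig⟩
  obtain ⟨htn, hmin⟩ := tauV_le n w
  set t := tauV n w with htdef
  have hwt : w t ≤ a := by have := hmin n le_rfl; rwa [hwn] at this
  have htpos : 0 < t := by
    rcases Nat.eq_zero_or_pos t with h | h
    · exfalso; rw [h, hw0] at hwt; omega
    · exact h
  show (vervaat n w, n - t) ∈ VervaatTarget n a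
  refine ⟨⟨?_, ?_, ?_, ?_⟩, Nat.sub_le n t, ?_, ?_⟩
  · show vervaat n w 0 = 0
    rw [vervaat_lo n w htdef.symm (Nat.zero_le _), add_zero, sub_self]
  · intro j hj
    show |vervaat n w (j + 1) - vervaat n w j| = 1
    by_cases hc : j + 1 ≤ n - t
    · rw [vervaat_lo n w htdef.symm hc, vervaat_lo n w htdef.symm (show j ≤ n - t by omega)]
      rw [show t + (j+1) = (t+j)+1 from by omega]
      rw [show w ((t+j)+1) - w t - (w (t+j) - w t) = w ((t+j)+1) - w (t+j) from by ring]
      exact hstep (t+j) (by omega)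
    · by_cases hc2 : j ≤ n - t
      · rw [vervaat_lo n w htdef.symm hc2,
            vervaat_hi n w hw0 htdef.symm (show n - t ≤ j + 1 by omega) (show j+1 ≤ n by omega)]
        rw [show t + j = n from by omega, show t + (j+1) - n = 1 from by omega, hwn]
        rw [show w 1 + a - w t - (a - w t) = w 1 - w 0 from by rw [hw0]; ring]
        exact hstep 0 (by omega)
      · rw [vervaat_hi n w hw0 htdef.symm (show n - t ≤ j by omega) (show j ≤ n by omega),
            vervaat_hi n w hw0 htdef.symm (show n - t ≤ j+1 by omega) (show j+1 ≤ n by omega)]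
        rw [show t + (j+1) - n = (t + j - n) + 1 from by omega]
        rw [show w ((t+j-n)+1) + w n - w t - (w (t+j-n) + w n - w t)
              = w ((t+j-n)+1) - w (t+j-n) from by ring]
        exact hstep (t+j-n) (by omega)
  · show vervaat n w n = a
    rw [vervaat_hi n w hw0 htdef.symm (Nat.sub_le _ _) le_rfl,
        show t + n - n = t from by omega, hwn]
    ring
  · intro j hj
    exact vervaat_top n w hj
  · intro j hj
    have hj' : j ≤ n - t := hj
    show 0 ≤ vervaat n w j
    rw [vervaat_lo n w htdef.symm hj']
    have := hmin (t + j) (by omega)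
    linarith
  · intro j h1 h2
    have h1' : n - t ≤ j := h1
    show a < vervaat n w j
    rw [vervaat_hi n w hw0 htdef.symm h1' h2.le, hwn]
    have hlt : w t < w (t + j - n) := tauV_first n w htdef.symm (by omega) (by omega)
    linarith

lemma backward_maps (n : ℕ) (a : ℤ) (ha : a < 0) :
    Set.MapsTo (vinv n a) (VervaatTarget n a) (SimpleBridge n a) := by
  rintro ⟨v, k⟩ ⟨⟨hv0, hvstep, hvn, hvbig⟩, hkn, hpos, hgt⟩
  replace hv0 : v 0 = 0 := hv0
  replace hvstep : ∀ j < n, |v (j + 1) - v j| = 1 := hvstep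
  replace hvn : v n = a := hvn
  replace hvbig : ∀ j, n < j → v j = 0 := hvbig
  replace hkn : k ≤ n := hkn
  replace hpos : ∀ j ≤ k, 0 ≤ v j := hpos
  replace hgt : ∀ j, k ≤ j → j < n → a < v j := hgt
  have hk : k < n := by
    by_contra h
    push_neg at h
    have := hpos n h
    rw [hvn] at this; omega
  refine ⟨?_, ?_, ?_, ?_⟩
  · rw [vinv_lo n a v k hk.le (Nat.zero_le _), zero_add, sub_self]
  · intro j hj
    by_cases hc : j + 1 ≤ n - k
    · rw [vinv_lo n a v k hk.le hc, vinv_lo n a v k hk.le (show j ≤ n - k by omega)]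
      rw [show j + 1 + k = (j+k)+1 from by omega,
          show v ((j+k)+1) - v k - (v (j+k) - v k) = v ((j+k)+1) - v (j+k) from by ring]
      exact hvstep (j+k) (by omega)
    · by_cases hc2 : j ≤ n - k
      · rw [vinv_lo n a v k hk.le hc2,
            vinv_hi n a v k hk.le hv0 hvn (show n - k ≤ j + 1 by omega) (show j+1 ≤ n by omega)]
        rw [show j + k = n from by omega, show j + 1 + k - n = 1 from by omega, hvn]
        rw [show v 1 + a - v k - (a - v k) = v 1 - v 0 from by rw [hv0]; ring]
        exact hvstep 0 (by omega)
      · rw [vinv_hi n a v k hk.le hv0 hvn (show n - k ≤ j by omega) (show j ≤ n by omega),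
            vinv_hi n a v k hk.le hv0 hvn (show n - k ≤ j+1 by omega) (show j+1 ≤ n by omega)]
        rw [show j + 1 + k - n = (j + k - n) + 1 from by omega]
        rw [show v ((j+k-n)+1) + a - v k - (v (j+k-n) + a - v k)
              = v ((j+k-n)+1) - v (j+k-n) from by ring]
        exact hvstep (j+k-n) (by omega)
  · rw [vinv_hi n a v k hk.le hv0 hvn (Nat.sub_le _ _) le_rfl,
        show n + k - n = k from by omega]
    ring
  · intro j hj
    exact vinv_top n a v k hj

lemma tau_vinv (n : ℕ) (a : ℤ) (v : ℕ → ℤ) (k : ℕ)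
    (hv0 : v 0 = 0) (hvn : v n = a) (hk : k < n)
    (hpos : ∀ j ≤ k, 0 ≤ v j) (hgt : ∀ j, k ≤ j → j < n → a < v j) :
    tauV n (vinv n a (v, k)) = n - k := by
  have hwt : vinv n a (v, k) (n - k) = a - v k := by
    rw [vinv_hi n a v k hk.le hv0 hvn le_rfl (Nat.sub_le _ _),
        show n - k + k - n = 0 from by omega, hv0]
    ring
  apply tauV_eq
  · exact Nat.sub_le n k
  · intro i hi
    by_cases hc : i ≤ n - k
    · rw [hwt, vinv_lo n a v k hk.le hc]
      have hle : a ≤ v (i + k) := by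
        rcases lt_or_eq_of_le (show i + k ≤ n from by omega) with h | h
        · exact le_of_lt (hgt (i+k) (by omega) h)
        · rw [h, hvn]
      linarith
    · rw [hwt, vinv_hi n a v k hk.le hv0 hvn (by omega) hi]
      have := hpos (i + k - n) (by omega)
      linarith
  · intro j hjlt
    rw [hwt, vinv_lo n a v k hk.le (le_of_lt hjlt)]
    have := hgt (j+k) (by omega) (by omega)
    linarith

lemma vervaat_left_inv (n : ℕ) (a : ℤ) (ha : a < 0) :
    Set.LeftInvOn (vinv n a) (fun w => (vervaat n w, n - tauV n w)) (SimpleBridge n a) := by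
  rintro w ⟨hw0, hstep, hwn, hbig⟩
  show vinv n a (vervaat n w, n - tauV n w) = w
  obtain ⟨htn, hmin⟩ := tauV_le n w
  set t := tauV n w with htdef
  have hwt : w t ≤ a := by have := hmin n le_rfl; rwa [hwn] at this
  have htpos : 0 < t := by
    rcases Nat.eq_zero_or_pos t with h | h
    · exfalso; rw [h, hw0] at hwt; omega
    · exact h
  set v := vervaat n w with hvdef
  have hv0 : v 0 = 0 := by
    rw [hvdef, vervaat_lo n w htdef.symm (Nat.zero_le _), add_zero, sub_self]
  have hvn : v n = a := by
    rw [hvdef, vervaat_hi n w hw0 htdef.symm (Nat.sub_le _ _) le_rfl,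
        show t + n - n = t from by omega, hwn]
    ring
  funext j
  by_cases hjn : j ≤ n
  · by_cases hc : j ≤ n - (n - t)
    · rw [vinv_lo n a v (n - t) (Nat.sub_le _ _) hc]
      rw [hvdef,
          vervaat_hi n w hw0 htdef.symm (show n - t ≤ j + (n - t) by omega) (by omega),
          vervaat_hi n w hw0 htdef.symm (le_refl (n - t)) (Nat.sub_le _ _)]
      rw [show t + (j + (n - t)) - n = j from by omega,
          show t + (n - t) - n = 0 from by omega, hw0]
      ring
    · rw [vinv_hi n a v (n - t) (Nat.sub_le _ _) hv0 hvn (by omega) hjn]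
      rw [show j + (n - t) - n = j - t from by omega]
      rw [hvdef, vervaat_lo n w htdef.symm (show j - t ≤ n - t from by omega),
          vervaat_hi n w hw0 htdef.symm (le_refl (n - t)) (Nat.sub_le _ _)]
      rw [show t + (j - t) = j from by omega, show t + (n - t) - n = 0 from by omega,
          hw0, hwn]
      ring
  · rw [vinv_top n a v (n - t) (by omega)]
    exact (hbig j (by omega)).symm

lemma vervaat_right_inv (n : ℕ) (a : ℤ) (ha : a < 0) :
    Set.RightInvOn (vinv n a) (fun w => (vervaat n w, n - tauV n w)) (VervaatTarget n a) := by
  rintro ⟨v, k⟩ ⟨⟨hv0, hvstep, hvn, hvbig⟩, hkn, hpos, hgt⟩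
  replace hv0 : v 0 = 0 := hv0
  replace hvstep : ∀ j < n, |v (j + 1) - v j| = 1 := hvstep
  replace hvn : v n = a := hvn
  replace hvbig : ∀ j, n < j → v j = 0 := hvbig
  replace hkn : k ≤ n := hkn
  replace hpos : ∀ j ≤ k, 0 ≤ v j := hpos
  replace hgt : ∀ j, k ≤ j → j < n → a < v j := hgt
  have hk : k < n := by
    by_contra h
    push_neg at h
    have := hpos n h
    rw [hvn] at this; omega
  have ht : tauV n (vinv n a (v, k)) = n - k := tau_vinv n a v k hv0 hvn hk hpos hgt
  set w := vinv n a (v, k) with hwdef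
  show (vervaat n w, n - tauV n w) = (v, k)
  have hw0 : w 0 = 0 := by
    rw [hwdef, vinv_lo n a v k hk.le (Nat.zero_le _), zero_add, sub_self]
  have hwn : w n = a := by
    rw [hwdef, vinv_hi n a v k hk.le hv0 hvn (Nat.sub_le _ _) le_rfl,
        show n + k - n = k from by omega]
    ring
  simp only [Prod.mk.injEq]
  constructor
  · funext i
    by_cases hin : i ≤ n
    · by_cases hc : i ≤ n - (n - k)
      · rw [vervaat_lo n w ht hc]
        rw [hwdef,
            vinv_hi n a v k hk.le hv0 hvn (show n - k ≤ n - k + i by omega) (by omega),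
            vinv_hi n a v k hk.le hv0 hvn (le_refl (n-k)) (Nat.sub_le _ _)]
        rw [show n - k + i + k - n = i from by omega,
            show n - k + k - n = 0 from by omega, hv0]
        ring
      · rw [vervaat_hi n w hw0 ht (by omega) hin, hwn]
        rw [show n - k + i - n = i - k from by omega]
        rw [hwdef, vinv_lo n a v k hk.le (show i - k ≤ n - k by omega),
            vinv_hi n a v k hk.le hv0 hvn (le_refl (n-k)) (Nat.sub_le _ _)]
        rw [show i - k + k = i from by omega, show n - k + k - n = 0 from by omega, hv0]
        ring
    · rw [vervaat_top n w (by omega), hvbig i (by omega)]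
  · rw [ht]; omega

/-- for `n ≥ 1` and `a < 0` with `a ≡ n (mod 2)`, the map
`w ↦ (V(w), n − τ_V(w))` is a bijection from simple bridges of length `n` ending at `a`
onto the set of pairs `(v,k)` as above. -/
theorem vervaat_bijection (n : ℕ) (hn : 1 ≤ n) (a : ℤ) (ha : a < 0)
    (hpar : a ≡ (n : ℤ) [ZMOD 2]) :
    Set.BijOn (fun w => (vervaat n w, n - tauV n w)) (SimpleBridge n a)
      (VervaatTarget n a) := by
  exact Set.InvOn.bijOn ⟨vervaat_left_inv n a ha, vervaat_right_inv n a ha⟩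
    (forward_maps n a ha) (backward_maps n a ha)
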